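/- arXiv:0806.0280 — 2 statements merged into one kernel-verified Lean document; each statement's English description precedes it below -/
import Mathlib

section
/- For every sufficiently large even n, τ_E(NC²_n) ≥ n²/8 + (n−2)/12; that is, Avoider has a strategy guaranteeing that his claimed edge set remains bipartite (contains no odd cycle) throughout at least his first ⌈n²/8 + (n−2)/12⌉ − 1 moves, so no Enforcer strategy can win before that. -/
/-- An edge of the complete graph `K_n` on vertex set `Fin n`:
a non-diagonal element of `Sym2 (Fin n)`. -/
abbrev Edge (n : ℕ) := {e : Sym2 (Fin n) // ¬ e.IsDiag}

/-- A position in the game: the pair (edges claimed by Avoider, edges claimed by Enforcer). -/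
abbrev Position (n : ℕ) := Finset (Edge n) × Finset (Edge n)

/-- A strategy assigns to each position an edge to claim. -/
abbrev Strategy (n : ℕ) := Position n → Edge n

/-- A strategy is legal if, whenever some edge is still unclaimed,
it selects a previously unclaimed edge. -/
def Legal (n : ℕ) (s : Strategy n) : Prop :=
  ∀ p : Position n, p.1 ∪ p.2 ≠ Finset.univ → s p ∉ p.1 ∪ p.2

/-- The position after `t` full rounds, Avoider moving first in each round. -/
def play (n : ℕ) (sA sE : Strategy n) : ℕ → Position n
  | 0 => (∅, ∅)
  | t + 1 =>
    let p := play n sA sE t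
    let a : Finset (Edge n) := insert (sA p) p.1
    (a, insert (sE (a, p.2)) p.2)

/-- Enforcer can force Avoider's claimed edge set to contain a losing set of `F`
by the end of Avoider's `t`-th move. -/
def EnforcerWinsBy (n : ℕ) (F : Set (Finset (Edge n))) (t : ℕ) : Prop :=
  ∃ sE : Strategy n, Legal n sE ∧ ∀ sA : Strategy n, Legal n sA →
    ∃ L ∈ F, L ⊆ (play n sA sE t).1

/-- The minimum number of moves Enforcer needs to win the Avoider–Enforcer game on `F`;
`⊤` if Enforcer cannot win. -/
noncomputable def tauE (n : ℕ) (F : Set (Finset (Edge n))) : ℕ∞ :=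
  sInf ((fun t : ℕ => (t : ℕ∞)) '' {t : ℕ | EnforcerWinsBy n F t})

/-- The simple graph on `Fin n` whose edges are the elements of `E`. -/
def toGraph (n : ℕ) (E : Finset (Edge n)) : SimpleGraph (Fin n) :=
  SimpleGraph.fromEdgeSet (Subtype.val '' (E : Set (Edge n)))

/-- `NC²_n`: the family of edge sets of non-bipartite (non-2-colorable) graphs on `Fin n`. -/
def NC2 (n : ℕ) : Set (Finset (Edge n)) :=
  {E | ¬ (toGraph n E).Colorable 2}

/-!
Avoider first builds a matching `M` of size `m ≈ n/2 - √n`, always claiming an edge disjoint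
from his earlier ones, while Enforcer claims `m` edges. Extend `M` to a perfect pairing of the
vertices and look at the 2-colourings that split every pair: each has `n²/4` bichromatic edges,
and flipping the colours of one pair shows that every Enforcer edge which is not a pair is
monochromatic for exactly half of them. Fix such a colouring making at least half of those
Enforcer edges monochromatic. From then on Avoider claims only bichromatic edges, so his graph
stays bipartite, and since the wasted monochromatic Enforcer edges also fill the board, the
bichromatic edges last for about `n²/8 + n/8` rounds.
-/

open Finset Function

variable {n : ℕ}

section Game

variable {sA sA' sE : Strategy n} {F : Set (Finset (Edge n))}

lemma card_edge : Fintype.card (Edge n) = n.choose 2 := by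
  simpa using Sym2.card_subtype_not_diag (α := Fin n)

lemma play_fst_mono : Monotone fun t => (play n sA sE t).1 :=
  monotone_nat_of_le_succ fun _ => subset_insert _ _

lemma play_snd_mono : Monotone fun t => (play n sA sE t).2 :=
  monotone_nat_of_le_succ fun _ => subset_insert _ _

lemma card_claimed_play_le (t : ℕ) : #((play n sA sE t).1 ∪ (play n sA sE t).2) ≤ 2 * t := by
  induction t with
  | zero => simp [play]
  | succ t ih =>
    simp only [play, insert_union, union_insert]
    grind [card_insert_le]

lemma Legal.notMem_of_card_lt {s : Strategy n} (hs : Legal n s) {p : Position n}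
    (hp : #(p.1 ∪ p.2) < n.choose 2) : s p ∉ p.1 ∪ p.2 :=
  hs p fun h => by rw [h, card_univ, card_edge] at hp; exact lt_irrefl _ hp

lemma card_play_of_legal (hA : Legal n sA) (hE : Legal n sE) {t : ℕ} (ht : 2 * t ≤ n.choose 2) :
    #(play n sA sE t).1 = t ∧ #(play n sA sE t).2 = t ∧
      Disjoint (play n sA sE t).1 (play n sA sE t).2 := by
  induction t with
  | zero => simp [play]
  | succ t ih =>
    obtain ⟨h1, h2, hdisj⟩ := ih (by omega)
    set p := play n sA sE t
    have hA' := hA.notMem_of_card_lt (p := p) (by rw [card_union_of_disjoint hdisj]; omega)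
    have hE' := hE.notMem_of_card_lt (p := (insert (sA p) p.1, p.2)) (by
      rw [card_union_of_disjoint (disjoint_insert_left.2 ⟨by grind, hdisj⟩),
        card_insert_of_notMem (by grind)]
      omega)
    simp only [play]
    refine ⟨?_, ?_, ?_⟩
    · rw [card_insert_of_notMem (by grind), h1]
    · rw [card_insert_of_notMem (by grind), h2]
    · exact disjoint_insert_right.2 ⟨by grind, disjoint_insert_left.2 ⟨by grind, hdisj⟩⟩

lemma play_congr {t : ℕ} (h : ∀ k < t, sA (play n sA sE k) = sA' (play n sA sE k)) :
    play n sA sE t = play n sA' sE t := by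
  induction t with
  | zero => rfl
  | succ t ih =>
    have ih := ih fun k hk => h k (by omega)
    simp only [play, ← ih, h t (by omega)]

lemma EnforcerWinsBy.mono {t t' : ℕ} (h : t ≤ t') (hw : EnforcerWinsBy n F t) :
    EnforcerWinsBy n F t' := by
  obtain ⟨sE, hE, hwin⟩ := hw
  refine ⟨sE, hE, fun sA hA => ?_⟩
  obtain ⟨L, hL, hsub⟩ := hwin sA hA
  exact ⟨L, hL, hsub.trans (play_fst_mono h)⟩

lemma le_tauE_of_not_enforcerWinsBy {N : ℕ} (h : ¬ EnforcerWinsBy n F (N - 1)) :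
    (N : ℕ∞) ≤ tauE n F := by
  refine le_sInf ?_
  rintro _ ⟨t, ht, rfl⟩
  by_contra hlt
  have hlt : t < N := by simpa using not_le.1 hlt
  exact h (ht.mono (by omega))

end Game

section Preferring

def freeEdges (p : Position n) : Finset (Edge n) := univ \ (p.1 ∪ p.2)

@[simp]
lemma mem_freeEdges {p : Position n} {e : Edge n} : e ∈ freeEdges p ↔ e ∉ p.1 ∪ p.2 := by
  simp [freeEdges]

noncomputable def preferring (e₀ : Edge n) (S : Position n → Finset (Edge n)) : Strategy n :=
  fun p => if h : (S p ∩ freeEdges p).Nonempty then h.choose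
    else if h' : (freeEdges p).Nonempty then h'.choose else e₀

variable {e₀ : Edge n} {S : Position n → Finset (Edge n)} {p : Position n}

lemma preferring_mem (h : (S p ∩ freeEdges p).Nonempty) :
    preferring e₀ S p ∈ S p ∩ freeEdges p := by
  rw [preferring, dif_pos h]
  exact h.choose_spec

lemma legal_preferring : Legal n (preferring e₀ S) := by
  intro p hp
  have hfree : (freeEdges p).Nonempty := by
    simpa [freeEdges, sdiff_nonempty, ← univ_subset_iff] using hp
  by_cases h : (S p ∩ freeEdges p).Nonempty
  · exact mem_freeEdges.1 (mem_of_mem_inter_right (preferring_mem h))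
  · rw [preferring, dif_neg h, dif_pos hfree]
    exact mem_freeEdges.1 hfree.choose_spec

lemma nonempty_inter_freeEdges {C W : Finset (Edge n)} (hW : W ⊆ p.2)
    (hCW : Disjoint C W) (h : #(p.1 ∪ p.2) < #C + #W) : (C ∩ freeEdges p).Nonempty := by
  by_contra h0
  have hC : C ⊆ p.1 ∪ p.2 := fun e he => by
    by_contra he'
    exact h0 ⟨e, mem_inter.2 ⟨he, mem_freeEdges.2 he'⟩⟩
  have := card_le_card (union_subset hC (hW.trans subset_union_right))
  rw [card_union_of_disjoint hCW] at this
  omega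

end Preferring

lemma Edge.exists_eq_mk (e : Edge n) : ∃ a b, a ≠ b ∧ e.val = s(a, b) := by
  obtain ⟨z, hz⟩ := e
  induction z using Sym2.ind with
  | h a b => exact ⟨a, b, by simpa using hz, rfl⟩

def freshEdges (A : Finset (Edge n)) : Finset (Edge n) :=
  {e | ∀ v ∈ e.val, ∀ g ∈ A, v ∉ g.val}

lemma exists_edge_notMem_of_card_lt (U : Finset (Fin n)) (B : Finset (Edge n))
    (h : #B < (#U).choose 2) : ∃ e ∉ B, ∀ v ∈ e.val, v ∈ U := by
  obtain ⟨z, hz, hzB⟩ := exists_mem_notMem_of_card_lt_card (s := B.map (Embedding.subtype _))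
    (t := U.offDiag.image (uncurry Sym2.mk)) (by rwa [card_map, Sym2.card_image_offDiag])
  obtain ⟨⟨a, b⟩, hab, rfl⟩ := mem_image.1 hz
  obtain ⟨ha, hb, hne⟩ := mem_offDiag.1 hab
  refine ⟨⟨s(a, b), by simpa using hne⟩, fun h => hzB (mem_map_of_mem _ h), fun v hv => ?_⟩
  rcases Sym2.mem_iff.1 hv with rfl | rfl <;> assumption

section PairUp

variable {α : Type*} [DecidableEq α] {f : α → α} {a b : α}

def pairUp (f : α → α) (a b : α) : α → α :=
  fun v => if v = a then b else if v = b then a else f v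

lemma Function.Involutive.pairUp (hf : Involutive f) (ha : f a = a) (hb : f b = b) (hne : a ≠ b) :
    Involutive (pairUp f a b) := by
  intro v
  by_cases hva : v = a
  · simp [_root_.pairUp, hva, hne.symm]
  by_cases hvb : v = b
  · simp [_root_.pairUp, hvb, hne.symm]
  have hfa : f v ≠ a := fun h => hva (by rw [← hf v, h, ha])
  have hfb : f v ≠ b := fun h => hvb (by rw [← hf v, h, hb])
  simp [_root_.pairUp, hva, hvb, hfa, hfb, hf v]

lemma card_fixed_pairUp [Fintype α] (ha : f a = a) (hb : f b = b) (hne : a ≠ b) :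
    #{v | pairUp f a b v = v} + 2 = #{v | f v = v} := by
  have hfix : ({v | pairUp f a b v = v} : Finset α) =
      (({v | f v = v} : Finset α).erase a).erase b := by
    ext v
    simp only [mem_filter, mem_univ, true_and, mem_erase]
    by_cases hva : v = a
    · simp [pairUp, hva, hne.symm]
    by_cases hvb : v = b
    · simp [pairUp, hvb, hne, hne.symm]
    simp [pairUp, hva, hvb]
  have h₁ := card_erase_add_one (s := ({v | f v = v} : Finset α)) (a := a) (by simp [ha])
  have h₂ := card_erase_add_one (s := ({v | f v = v} : Finset α).erase a) (a := b)
    (by simp [hb, hne.symm])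
  rw [hfix]
  omega

end PairUp

section Pairing

def IsPairing (f : Fin n → Fin n) (A : Finset (Edge n)) : Prop :=
  Involutive f ∧ ∀ e : Edge n, e ∈ A ↔ ∃ v, e.val = s(v, f v)

variable {f : Fin n → Fin n} {A : Finset (Edge n)}

lemma isPairing_id_empty : IsPairing id (∅ : Finset (Edge n)) :=
  ⟨fun _ => rfl, fun e => by simpa using fun v h => e.2 (by simp [h])⟩

lemma IsPairing.eq_of_mem (hA : IsPairing f A) {e : Edge n} (he : e ∈ A) {v : Fin n}
    (hv : v ∈ e.val) : e.val = s(v, f v) := by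
  obtain ⟨u, hu⟩ := (hA.2 e).1 he
  rw [hu, Sym2.mem_iff] at hv
  rcases hv with rfl | rfl
  · exact hu
  · rw [hu, hA.1 u, Sym2.eq_swap]

lemma IsPairing.exists_mem_iff (hA : IsPairing f A) {v : Fin n} :
    (∃ e ∈ A, v ∈ e.val) ↔ f v ≠ v := by
  constructor
  · rintro ⟨e, he, hv⟩ hfv
    exact e.2 (by rw [hA.eq_of_mem he hv, hfv]; exact Sym2.mk_isDiag_iff.2 rfl)
  · intro hfv
    exact ⟨⟨s(v, f v), by simpa using hfv.symm⟩, (hA.2 _).2 ⟨v, rfl⟩,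
      Sym2.mem_mk_left _ _⟩

lemma IsPairing.insert (hA : IsPairing f A) {e : Edge n} (he : ∀ v ∈ e.val, f v = v) :
    ∃ f', IsPairing f' (insert e A) ∧ #{v | f' v = v} + 2 = #{v | f v = v} := by
  obtain ⟨a, b, hne, hab⟩ := e.exists_eq_mk
  have ha : f a = a := he a (by simp [hab])
  have hb : f b = b := he b (by simp [hab])
  refine ⟨pairUp f a b, ⟨hA.1.pairUp ha hb hne, fun e' => ?_⟩, card_fixed_pairUp ha hb hne⟩
  rw [mem_insert, hA.2]
  constructor
  · rintro (rfl | ⟨v, hv⟩)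
    · exact ⟨a, by simp [pairUp, hab]⟩
    have hfv : f v ≠ v := fun h => e'.2 (by rw [hv, h]; exact Sym2.mk_isDiag_iff.2 rfl)
    have hva : v ≠ a := by rintro rfl; exact hfv ha
    have hvb : v ≠ b := by rintro rfl; exact hfv hb
    exact ⟨v, by simp [pairUp, hv, hva, hvb]⟩
  · rintro ⟨v, hv⟩
    by_cases hva : v = a
    · exact Or.inl (Subtype.ext (by simp [hv, hab, pairUp, hva]))
    by_cases hvb : v = b
    · exact Or.inl (Subtype.ext (by simp [hv, hab, pairUp, hvb, hne.symm, Sym2.eq_swap]))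
    exact Or.inr ⟨v, by simpa [pairUp, hva, hvb] using hv⟩

lemma IsPairing.exists_fixedPointFree_extension (hA : IsPairing f A)
    (hcard : 2 * #A + #{v | f v = v} = n) (hn : Even n) :
    ∃ g A', IsPairing g A' ∧ A ⊆ A' ∧ (∀ v, g v ≠ v) ∧ 2 * #A' = n := by
  induction h : #({v | f v = v} : Finset (Fin n)) using Nat.strong_induction_on
    generalizing f A with
  | _ k ih =>
  rcases ({v | f v = v} : Finset (Fin n)).eq_empty_or_nonempty with h0 | ⟨a, ha⟩
  · refine ⟨f, A, hA, subset_rfl, fun v hv => ?_, by simpa [h0] using hcard⟩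
    simpa [hv] using (filter_eq_empty_iff.1 h0) (mem_univ v)
  obtain ⟨b, hb⟩ : (({v | f v = v} : Finset (Fin n)).erase a).Nonempty := by
    rw [← card_pos, card_erase_of_mem ha]
    obtain ⟨j, hj⟩ := hn
    have := card_pos.2 ⟨a, ha⟩
    omega
  obtain ⟨hba, hb⟩ := mem_erase.1 hb
  let e : Edge n := ⟨s(a, b), by simpa using hba.symm⟩
  have heA : e ∉ A := fun he =>
    hA.exists_mem_iff.1 ⟨e, he, Sym2.mem_mk_left a b⟩ (mem_filter.1 ha).2
  obtain ⟨f', hf', hcard'⟩ := hA.insert (e := e) fun v hv => by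
    rcases Sym2.mem_iff.1 hv with rfl | rfl
    exacts [(mem_filter.1 ha).2, (mem_filter.1 hb).2]
  obtain ⟨g, A', hg, hsub, hfree, hcardA'⟩ :=
    ih _ (by omega) hf' (by rw [card_insert_of_notMem heA]; omega) rfl
  exact ⟨g, A', hg, (subset_insert _ _).trans hsub, hfree, hcardA'⟩

end Pairing

lemma exists_card_le_two_mul_card_filter {α β : Type*} {S : Finset α} {E : Finset β}
    (r : α → β → Prop) [∀ a b, Decidable (r a b)] (hS : S.Nonempty)
    (h : ∀ b ∈ E, #S ≤ 2 * #{a ∈ S | r a b}) :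
    ∃ a ∈ S, #E ≤ 2 * #{b ∈ E | r a b} := by
  refine exists_le_of_sum_le hS ?_
  calc ∑ _ ∈ S, #E = ∑ _ ∈ E, #S := by simp [mul_comm]
    _ ≤ ∑ b ∈ E, 2 * #{a ∈ S | r a b} := sum_le_sum h
    _ = ∑ a ∈ S, 2 * #{b ∈ E | r a b} := by
      rw [← mul_sum, ← mul_sum]
      exact congrArg _ (sum_card_bipartiteAbove_eq_sum_card_bipartiteBelow r).symm

lemma card_le_card_filter_notMem_add {α : Type*} [DecidableEq α] {M A B : Finset α}
    (hMA : M ⊆ A) (hMB : Disjoint M B) : #B ≤ #{b ∈ B | b ∉ A} + (#A - #M) := by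
  have h₁ := card_filter_add_card_filter_not (s := B) (· ∈ A)
  have h₂ : #{b ∈ B | b ∈ A} ≤ #A - #M := by
    rw [← card_sdiff_of_subset hMA]
    exact card_le_card fun b hb =>
      mem_sdiff.2 ⟨(mem_filter.1 hb).2, disjoint_right.1 hMB (mem_filter.1 hb).1⟩
  omega

section Coloring

variable {V : Type*}

def cutGraph (σ : V → Bool) : SimpleGraph V := (⊤ : SimpleGraph Bool).comap σ

@[simp]
lemma cutGraph_adj {σ : V → Bool} {u v : V} : (cutGraph σ).Adj u v ↔ σ u ≠ σ v := by
  simp [cutGraph]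

instance (σ : V → Bool) : DecidableRel (cutGraph σ).Adj := fun _ _ =>
  decidable_of_iff _ cutGraph_adj.symm

lemma colorable_cutGraph (σ : V → Bool) : (cutGraph σ).Colorable 2 := by
  simpa [cutGraph] using SimpleGraph.Coloring.colorable (SimpleGraph.Hom.comap σ ⊤)

variable [DecidableEq V] {f : V → V}

def flipPair (f : V → V) (w : V) (σ : V → Bool) : V → Bool :=
  fun x => if x = w ∨ x = f w then !σ x else σ x

lemma flipPair_flipPair (w : V) (σ : V → Bool) : flipPair f w (flipPair f w σ) = σ := by
  funext x
  by_cases hx : x = w ∨ x = f w <;> simp [flipPair, hx]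

variable [Fintype V]

def antipodal (f : V → V) : Finset (V → Bool) := {σ | ∀ v, σ (f v) = !σ v}

@[simp]
lemma mem_antipodal {σ : V → Bool} : σ ∈ antipodal f ↔ ∀ v, σ (f v) = !σ v := by
  simp [antipodal]

lemma antipodal_nonempty [LinearOrder V] (hf : Involutive f) (hfree : ∀ v, f v ≠ v) :
    (antipodal f).Nonempty := by
  refine ⟨fun v => decide (v < f v), mem_antipodal.2 fun v => ?_⟩
  show decide (f v < f (f v)) = !decide (v < f v)
  rw [hf v]
  rcases lt_or_gt_of_ne (hfree v) with h | h <;> simp [h, h.le]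

lemma card_true_eq_card_false {σ : V → Bool} (hf : Involutive f) (hσ : σ ∈ antipodal f) :
    #{v | σ v} = #{v | σ v = false} := by
  rw [mem_antipodal] at hσ
  refine card_nbij' f f (fun v hv => ?_) (fun v hv => ?_) (fun v _ => hf v) (fun v _ => hf v) <;>
    simp_all

lemma flipPair_mem_antipodal (hf : Involutive f) (w : V) {σ : V → Bool}
    (hσ : σ ∈ antipodal f) : flipPair f w σ ∈ antipodal f := by
  refine mem_antipodal.2 fun v => ?_
  have hσ := mem_antipodal.1 hσ v
  have hiff : (f v = w ∨ f v = f w) ↔ (v = w ∨ v = f w) := by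
    rw [← hf.injective.eq_iff (a := f v) (b := w), hf v, hf.injective.eq_iff]
    tauto
  by_cases hv : v = w ∨ v = f w <;> simp [flipPair, hv, hiff, hσ]

lemma card_antipodal_le_two_mul (hf : Involutive f) {u w : V} (huw : u ≠ w) (hwu : w ≠ f u) :
    #(antipodal f) ≤ 2 * #{σ ∈ antipodal f | ¬ (cutGraph σ).Adj u w} := by
  have hu : ¬ (u = w ∨ u = f w) := by
    rintro (h | h)
    exacts [huw h, hwu (by rw [h, hf w])]
  have hflip : ∀ σ, (cutGraph (flipPair f w σ)).Adj u w ↔ ¬ (cutGraph σ).Adj u w := by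
    intro σ
    cases hσu : σ u <;> cases hσw : σ w <;> simp [flipPair, hu, hσu, hσw]
  have hle : #{σ ∈ antipodal f | (cutGraph σ).Adj u w} ≤
      #{σ ∈ antipodal f | ¬ (cutGraph σ).Adj u w} := by
    refine card_le_card_of_injOn (flipPair f w) (fun σ hσ => ?_) ?_
    · simp only [coe_filter, Set.mem_ofPred_eq] at hσ ⊢
      exact ⟨flipPair_mem_antipodal hf w hσ.1, fun h => (hflip σ).1 h hσ.2⟩
    · intro σ _ τ _ h
      simpa [flipPair_flipPair] using congrArg (flipPair f w) h
  have := card_filter_add_card_filter_not (s := antipodal f) fun σ => (cutGraph σ).Adj u w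
  omega

end Coloring

def cutEdges (σ : Fin n → Bool) : Finset (Edge n) := {e | e.val ∈ (cutGraph σ).edgeSet}

lemma toGraph_le_cutGraph {σ : Fin n → Bool} {A : Finset (Edge n)} (h : A ⊆ cutEdges σ) :
    toGraph n A ≤ cutGraph σ := by
  rw [toGraph, ← SimpleGraph.fromEdgeSet_edgeSet (cutGraph σ)]
  refine SimpleGraph.fromEdgeSet_mono ?_
  rintro _ ⟨e, he, rfl⟩
  exact (mem_filter.1 (h he)).2

lemma card_mul_card_le_card_cutEdges (σ : Fin n → Bool) :
    #{v | σ v} * #{v | σ v = false} ≤ #(cutEdges σ) := by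
  rw [← card_product, ← card_map (Embedding.subtype _) (s := cutEdges σ),
    ← card_image_of_injOn (f := uncurry Sym2.mk)]
  · refine card_le_card fun z hz => ?_
    obtain ⟨⟨x, y⟩, hxy, rfl⟩ := mem_image.1 hz
    simp only [mem_product, mem_filter, mem_univ, true_and] at hxy
    refine mem_map.2 ⟨⟨s(x, y), by simp; grind⟩, ?_, rfl⟩
    simp [cutEdges, hxy.1, hxy.2]
  · rintro ⟨x, y⟩ hxy ⟨x', y'⟩ hxy' h
    simp only [coe_product, coe_filter, mem_univ, true_and, Set.mem_prod,
      Set.mem_ofPred_eq, uncurry_apply_pair, Sym2.eq_iff] at hxy hxy' h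
    grind

lemma mul_self_le_card_cutEdges {K : ℕ} {σ : Fin (2 * K) → Bool}
    (hbal : #{v | σ v} = #{v | σ v = false}) : K * K ≤ #(cutEdges σ) := by
  have hsum := card_filter_add_card_filter_not (s := univ) fun v => σ v = true
  simp only [Bool.not_eq_true, card_univ, Fintype.card_fin] at hsum
  have hK : #{v | σ v = true} = K := by omega
  calc K * K = #{v | σ v = true} * #{v | σ v = false} := by rw [← hbal, hK]
    _ ≤ _ := card_mul_card_le_card_cutEdges σ

lemma IsPairing.exists_coloring {g : Fin n → Fin n} {A : Finset (Edge n)} (hg : IsPairing g A)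
    (hfree : ∀ v, g v ≠ v) (B : Finset (Edge n)) :
    ∃ σ : Fin n → Bool, A ⊆ cutEdges σ ∧ #{v | σ v} = #{v | σ v = false} ∧
      #{e ∈ B | e ∉ A} ≤ 2 * #{e ∈ B | e ∉ cutEdges σ} := by
  obtain ⟨σ, hσ, hle⟩ := exists_card_le_two_mul_card_filter (E := {e ∈ B | e ∉ A})
    (fun σ e => e ∉ cutEdges σ) (antipodal_nonempty hg.1 hfree) fun e he => by
      obtain ⟨u, w, huw, he'⟩ := e.exists_eq_mk
      have hwu : w ≠ g u := fun h => (mem_filter.1 he).2 ((hg.2 e).2 ⟨u, by rw [he', h]⟩)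
      simpa [cutEdges, he'] using card_antipodal_le_two_mul hg.1 huw hwu
  refine ⟨σ, fun e he => ?_, card_true_eq_card_false hg.1 hσ, hle.trans ?_⟩
  · obtain ⟨v, hv⟩ := (hg.2 e).1 he
    simp [cutEdges, hv, mem_antipodal.1 hσ v]
  · refine Nat.mul_le_mul_left _ (card_le_card fun e he => ?_)
    simp only [mem_filter] at he ⊢
    exact ⟨he.1.1, he.2⟩

noncomputable def avoiderStrategy (e₀ : Edge n) (m : ℕ) (C : Finset (Edge n)) : Strategy n :=
  preferring e₀ fun p => if #p.1 < m then freshEdges p.1 else C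

section AvoiderStrategy

variable {e₀ : Edge n} {m : ℕ} {C : Finset (Edge n)} {p : Position n}

lemma legal_avoiderStrategy : Legal n (avoiderStrategy e₀ m C) := legal_preferring

lemma avoiderStrategy_mem_freshEdges (hm : #p.1 < m)
    (h : (freshEdges p.1 ∩ freeEdges p).Nonempty) :
    avoiderStrategy e₀ m C p ∈ freshEdges p.1 ∩ freeEdges p := by
  have := preferring_mem (e₀ := e₀) (S := fun p => if #p.1 < m then freshEdges p.1 else C)
    (p := p) (by simpa [hm] using h)
  simpa [avoiderStrategy, hm] using this

lemma avoiderStrategy_mem (hm : m ≤ #p.1) (h : (C ∩ freeEdges p).Nonempty) :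
    avoiderStrategy e₀ m C p ∈ C := by
  have hm : ¬ #p.1 < m := by omega
  have := preferring_mem (e₀ := e₀) (S := fun p => if #p.1 < m then freshEdges p.1 else C)
    (p := p) (by simpa [hm] using h)
  simp only [hm, if_false] at this
  exact mem_of_mem_inter_left this

variable {sE : Strategy n}

lemma exists_isPairing_play (hE : Legal n sE) (hm : 2 * m ≤ (n - 2 * m).choose 2) {t : ℕ}
    (ht : t ≤ m) : ∃ f, IsPairing f (play n (avoiderStrategy e₀ m C) sE t).1 ∧
      2 * t + #{v | f v = v} = n := by
  induction t with
  | zero => exact ⟨id, isPairing_id_empty, by simp⟩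
  | succ t ih =>
    obtain ⟨f, hf, hfix⟩ := ih (by omega)
    set p := play n (avoiderStrategy e₀ m C) sE t
    have hpA : #p.1 = t := (card_play_of_legal legal_preferring hE
      (by have := Nat.choose_le_choose 2 (Nat.sub_le n (2 * m)); omega)).1
    have hfresh : (freshEdges p.1 ∩ freeEdges p).Nonempty := by
      have := Nat.choose_le_choose 2 (show n - 2 * m ≤ #({v | f v = v} : Finset _) by omega)
      obtain ⟨e, heB, heU⟩ := exists_edge_notMem_of_card_lt {v | f v = v} (p.1 ∪ p.2) (by
        have : #(p.1 ∪ p.2) ≤ 2 * t := card_claimed_play_le t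
        omega)
      refine ⟨e, mem_inter.2 ⟨mem_filter.2 ⟨mem_univ _, fun v hv g hg hvg => ?_⟩,
        mem_freeEdges.2 heB⟩⟩
      exact hf.exists_mem_iff.1 ⟨g, hg, hvg⟩ (mem_filter.1 (heU v hv)).2
    have hmove :=
      avoiderStrategy_mem_freshEdges (e₀ := e₀) (m := m) (C := C) (p := p) (by omega) hfresh
    obtain ⟨f', hf', hfix'⟩ := hf.insert (e := avoiderStrategy e₀ m C p) fun v hv => by
      by_contra hfv
      obtain ⟨g, hg, hvg⟩ := hf.exists_mem_iff.2 hfv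
      exact (mem_filter.1 (mem_inter.1 hmove).1).2 v hv g hg hvg
    refine ⟨f', hf', ?_⟩
    omega

lemma avoiderStrategy_congr {C' : Finset (Edge n)} (hm : #p.1 < m) :
    avoiderStrategy e₀ m C p = avoiderStrategy e₀ m C' p := by
  simp [avoiderStrategy, preferring, hm]

lemma play_avoiderStrategy_fst_subset {T : ℕ} (hmT : m ≤ T)
    (hsub : (play n (avoiderStrategy e₀ m C) sE m).1 ⊆ C)
    (hcard : m ≤ #(play n (avoiderStrategy e₀ m C) sE m).1)
    (hfree : ∀ t, m ≤ t → t < T →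
      (C ∩ freeEdges (play n (avoiderStrategy e₀ m C) sE t)).Nonempty) :
    (play n (avoiderStrategy e₀ m C) sE T).1 ⊆ C := by
  induction T, hmT using Nat.le_induction with
  | base => exact hsub
  | succ t hmt ih =>
    refine insert_subset (avoiderStrategy_mem ?_ (hfree t hmt (by omega)))
      (ih fun s h₁ h₂ => hfree s h₁ (by omega))
    exact hcard.trans (card_le_card (play_fst_mono hmt))

/- `hT` says `2 (T - 1) < K² + (2m - K) / 2`: the `K²` cut edges and the at least `(2m - K) / 2`
wasted Enforcer edges cannot all be claimed within `T - 1` rounds. -/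
theorem not_enforcerWinsBy_NC2 {K m T : ℕ} (hmT : m ≤ T)
    (hm : 2 * m ≤ (2 * K - 2 * m).choose 2)
    (hT : 4 * T + K < 2 * (K * K) + 2 * m + 4) : ¬ EnforcerWinsBy (2 * K) (NC2 (2 * K)) T := by
  rintro ⟨sE, hE, hwin⟩
  -- Avoider's strategy needs a fallback edge; Enforcer's strategy supplies one.
  set e₀ := sE (∅, ∅)
  have hcards := fun t (ht : t ≤ m) => card_play_of_legal (t := t)
    (legal_avoiderStrategy (e₀ := e₀) (m := m) (C := ∅)) hE
    (by have := Nat.choose_le_choose 2 (Nat.sub_le (2 * K) (2 * m)); omega)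
  obtain ⟨f, hf, hfix⟩ := exists_isPairing_play (e₀ := e₀) (C := ∅) hE hm le_rfl
  obtain ⟨hMcard, hBcard, hdisj⟩ := hcards m le_rfl
  set P := play _ (avoiderStrategy e₀ m ∅) sE m
  obtain ⟨g, A, hg, hMA, hgfree, hAcard⟩ :=
    hf.exists_fixedPointFree_extension (by rwa [hMcard]) (even_two_mul K)
  obtain ⟨σ, hAσ, hbal, hwaste⟩ := hg.exists_coloring hgfree P.2
  set W := {e ∈ P.2 | e ∉ cutEdges σ}
  have hC := mul_self_le_card_cutEdges hbal
  have hW : 2 * m ≤ K + 2 * #W := by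
    have := card_le_card_filter_notMem_add hMA hdisj
    omega
  set sA := avoiderStrategy e₀ m (cutEdges σ)
  have hagree : play _ sA sE m = P := (play_congr fun k hk => avoiderStrategy_congr
    (by rw [(hcards k hk.le).1]; exact hk)).symm
  have hsub : (play _ sA sE T).1 ⊆ cutEdges σ :=
    play_avoiderStrategy_fst_subset hmT (by rw [hagree]; exact hMA.trans hAσ)
      (by rw [hagree, hMcard]) fun t hmt htT => by
        refine nonempty_inter_freeEdges (W := W) ?_
          (disjoint_right.2 fun e he => (mem_filter.1 he).2) ?_
        · exact (filter_subset _ _).trans (hagree ▸ play_snd_mono hmt)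
        · have := card_claimed_play_le (sA := avoiderStrategy e₀ m (cutEdges σ)) (sE := sE) t
          omega
  obtain ⟨L, hL, hLsub⟩ := hwin sA legal_avoiderStrategy
  exact hL ((colorable_cutGraph σ).mono_left (toGraph_le_cutGraph (hLsub.trans hsub)))

end AvoiderStrategy

lemma ceil_quadratic_bounds {K : ℕ} (hK : 1 ≤ K) :
    let N := ⌈((2 * K : ℕ) : ℝ) ^ 2 / 8 + (((2 * K : ℕ) : ℝ) - 2) / 12⌉₊
    K * K ≤ 2 * N ∧ 6 * N ≤ 3 * (K * K) + K + 4 := by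
  intro N
  set x : ℝ := ((2 * K : ℕ) : ℝ) ^ 2 / 8 + (((2 * K : ℕ) : ℝ) - 2) / 12
  have hK' : (1 : ℝ) ≤ K := by exact_mod_cast hK
  have hx : x = (K : ℝ) ^ 2 / 2 + ((K : ℝ) - 1) / 6 := by push_cast [x]; ring
  have h₁ : x ≤ N := Nat.le_ceil x
  have h₂ : (N : ℝ) < x + 1 := Nat.ceil_lt_add_one (show 0 ≤ x by rw [hx]; positivity)
  constructor
  · have : ((K * K : ℕ) : ℝ) ≤ 2 * N := by push_cast; nlinarith
    exact_mod_cast this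
  · have : ((6 * N : ℕ) : ℝ) < 3 * (K * K) + K + 5 := by push_cast; nlinarith
    have : 6 * N < 3 * (K * K) + K + 5 := by exact_mod_cast this
    omega

/-- for every sufficiently large even `n`,
`τ_E(NC²_n) ≥ n²/8 + (n-2)/12`
(as `τ_E` is an integer, this is equivalent to the bound with the ceiling). -/
theorem tauE_nonbipartite_lower :
    ∃ n₀ : ℕ, ∀ n : ℕ, n₀ ≤ n → Even n →
      ((⌈(n : ℝ) ^ 2 / 8 + ((n : ℝ) - 2) / 12⌉₊ : ℕ) : ℕ∞) ≤ tauE n (NC2 n) := by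
  refine ⟨98, fun n hn ⟨K, hK⟩ => ?_⟩
  rw [← two_mul] at hK
  subst hK
  obtain ⟨hN₁, hN₂⟩ := ceil_quadratic_bounds (K := K) (by omega)
  set s := Nat.sqrt K
  have hs₁ : s * s ≤ K := Nat.sqrt_le K
  have hs₂ : K < (s + 1) * (s + 1) := Nat.lt_succ_sqrt K
  have hs₃ : 7 ≤ s := Nat.le_sqrt.2 (show 7 * 7 ≤ K by omega)
  have hs₄ : 7 * s ≤ s * s := Nat.mul_le_mul_right s hs₃
  have hK : 49 * K ≤ K * K := Nat.mul_le_mul_right K (by omega)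
  have hchoose : (2 * s + 4).choose 2 = (s + 2) * (2 * s + 3) := by
    rw [Nat.choose_two_right, show 2 * s + 4 - 1 = 2 * s + 3 by omega]
    exact Nat.div_eq_of_eq_mul_left two_pos (by ring)
  -- `m = K - √K - 2` keeps fresh edges available in phase one, and `2m - K ≈ K`.
  refine le_tauE_of_not_enforcerWinsBy (not_enforcerWinsBy_NC2 (m := K - (s + 2)) ?_ ?_ ?_)
  · omega
  · rw [show 2 * K - 2 * (K - (s + 2)) = 2 * s + 4 by omega, hchoose]
    have : (s + 1) * (s + 1) = s * s + 2 * s + 1 := by ring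
    have : (s + 2) * (2 * s + 3) = 2 * (s * s) + 7 * s + 6 := by ring
    omega
  · omega
end

section
/- There exists n₀ such that for every n ≥ n₀ the following holds with k = log₂ n: for every integer r ≥ 2 and all positive integers c₁ ≤ c₂ ≤ … ≤ c_r with c₁ + c₂ + … + c_r = n, one has Σ_{i=1}^{r} C(c_i, 2) + 4k·Σ_{i=1}^{r−1} c_i ≤ C(n−1, 2) + 4k, where C(m,2) = m(m−1)/2; i.e., the left-hand side is maximized (among r ≥ 2) at r = 2, c₁ = 1, c₂ = n−1. -/
/-!
Let `M` be the largest part and `S = n - M ≥ 1` the sum of the others. If `M ≥ 4k + 1`, then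
`∑ C(cᵢ, 2) ≤ C(S, 2) + C(M, 2)` by superadditivity of `C(·, 2)`, and the claim becomes
`(S - 1)(M - 1 - 4k) ≥ 0`. Otherwise every part is at most `4k + 1`, so `∑ C(cᵢ, 2) ≤ 2kn`
and the left-hand side is at most `6kn`, which is below `C(n - 1, 2)` once `log₂ n = o(n)` kicks in.
-/

open Finset Filter

theorem Nat.choose_add_choose_le_choose_add {k : ℕ} (hk : k ≠ 0) (a b : ℕ) :
    a.choose k + b.choose k ≤ (a + b).choose k := by
  rw [Nat.add_choose_eq]
  have hmem : ((k, 0) : ℕ × ℕ) ∈ antidiagonal k := by simp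
  have hne : ((0, k) : ℕ × ℕ) ≠ (k, 0) := by simp [hk]
  rw [← add_sum_erase _ _ hmem]
  gcongr
  · simp
  · calc b.choose k = a.choose 0 * b.choose k := by simp
      _ ≤ ∑ ij ∈ (antidiagonal k).erase (k, 0), a.choose ij.1 * b.choose ij.2 :=
        single_le_sum (f := fun ij : ℕ × ℕ => a.choose ij.1 * b.choose ij.2)
          (fun _ _ => Nat.zero_le _) (mem_erase.2 ⟨hne, by simp⟩)

theorem Finset.sum_choose_le_choose_sum {ι : Type*} {k : ℕ} (hk : k ≠ 0) (s : Finset ι)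
    (f : ι → ℕ) : ∑ i ∈ s, (f i).choose k ≤ (∑ i ∈ s, f i).choose k := by
  classical
  induction s using Finset.induction_on with
  | empty => simp [Nat.choose_eq_zero_of_lt (Nat.pos_of_ne_zero hk)]
  | insert j s hj ih =>
    rw [sum_insert hj, sum_insert hj]
    exact (Nat.add_le_add_left ih _).trans (Nat.choose_add_choose_le_choose_add hk _ _)

theorem Finset.two_mul_sum_choose_two_le {ι : Type*} {s : Finset ι} {f : ι → ℕ} {m : ℝ}
    (hf : ∀ i ∈ s, (f i : ℝ) ≤ m) :
    2 * ∑ i ∈ s, ((f i).choose 2 : ℝ) ≤ (m - 1) * ∑ i ∈ s, (f i : ℝ) := by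
  rw [mul_sum, mul_sum]
  refine sum_le_sum fun i hi => ?_
  rw [Nat.cast_choose_two]
  nlinarith [hf i hi, (f i).cast_nonneg (α := ℝ)]

theorem choose_two_add_choose_two_add_mul_le {S M : ℕ} {k : ℝ} (hS : 1 ≤ S)
    (hM : 4 * k + 1 ≤ M) :
    (S.choose 2 : ℝ) + M.choose 2 + 4 * k * S ≤ (S + M - 1).choose 2 + 4 * k := by
  have hS' : (1 : ℝ) ≤ S := by exact_mod_cast hS
  rw [Nat.cast_choose_two, Nat.cast_choose_two, Nat.cast_choose_two, Nat.cast_sub (by omega),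
    Nat.cast_add, Nat.cast_one]
  nlinarith [mul_nonneg (sub_nonneg.2 hS') (sub_nonneg.2 hM)]

theorem sum_choose_two_add_mul_sum_erase_le {ι : Type*} [DecidableEq ι] {s : Finset ι}
    {c : ι → ℕ} {j : ι} {k : ℝ} (hj : j ∈ s) (hmax : ∀ i ∈ s, c i ≤ c j)
    (hrest : 1 ≤ ∑ i ∈ s.erase j, c i) (hk : 0 ≤ k)
    (hlarge : 6 * k * (∑ i ∈ s, c i) ≤ ((∑ i ∈ s, c i) - 1).choose 2) :
    ∑ i ∈ s, ((c i).choose 2 : ℝ) + 4 * k * ∑ i ∈ s.erase j, (c i : ℝ) ≤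
      ((∑ i ∈ s, c i) - 1).choose 2 + 4 * k := by
  set S := ∑ i ∈ s.erase j, c i
  have hsum : ∑ i ∈ s, c i = S + c j := (sum_erase_add s c hj).symm
  have hsumR : ∑ i ∈ s, (c i : ℝ) = S + c j := by exact_mod_cast hsum
  have hS : ∑ i ∈ s.erase j, (c i : ℝ) = S := by push_cast [S]; rfl
  rw [hS]
  rw [hsum] at hlarge ⊢
  push_cast at hlarge
  rcases le_or_gt (4 * k + 1) (c j) with hbig | hsmall
  · have hsuper : ∑ i ∈ s.erase j, ((c i).choose 2 : ℝ) ≤ S.choose 2 := by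
      exact_mod_cast sum_choose_le_choose_sum two_ne_zero _ c
    rw [← sum_erase_add s _ hj]
    linarith [choose_two_add_choose_two_add_mul_le hrest hbig]
  · have hparts := two_mul_sum_choose_two_le (s := s) (f := c) (m := c j)
      fun i hi => by exact_mod_cast hmax i hi
    rw [hsumR] at hparts
    nlinarith [(c j).cast_nonneg (α := ℝ)]

theorem eventually_six_mul_logb_mul_le_choose_two :
    ∀ᶠ n : ℕ in atTop, 6 * Real.logb 2 n * n ≤ ((n - 1).choose 2 : ℝ) := by
  have hlog : ∀ᶠ x : ℝ in atTop, Real.logb 2 x ≤ x / 24 := by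
    filter_upwards [(Real.isLittleO_logb_id_atTop (b := 2)).bound (by norm_num : (0 : ℝ) < 1 / 24),
      eventually_ge_atTop 0] with x hx hx0
    rw [Real.norm_eq_abs, id, Real.norm_of_nonneg hx0] at hx
    linarith [le_abs_self (Real.logb 2 x)]
  filter_upwards [tendsto_natCast_atTop_atTop.eventually hlog, eventually_ge_atTop 6] with n hn h6
  have h6' : (6 : ℝ) ≤ n := by exact_mod_cast h6
  rw [Nat.cast_choose_two, Nat.cast_sub (by omega : 1 ≤ n), Nat.cast_one]
  nlinarith

theorem Fin.filter_val_lt_pred_eq_erase_last (m : ℕ) :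
    univ.filter (fun i : Fin (m + 1) => (i : ℕ) < m + 1 - 1) = univ.erase (Fin.last m) := by
  ext i
  simp [Fin.ext_iff, Fin.val_last, Nat.lt_iff_le_and_ne, Fin.is_le]

/-- for all sufficiently large `n`, with `k = log₂ n`,
for every `r ≥ 2` and all positive integers `c₁ ≤ c₂ ≤ … ≤ c_r` summing to `n`,
`Σ_{i=1}^{r} C(c_i, 2) + 4k·Σ_{i=1}^{r-1} c_i ≤ C(n-1, 2) + 4k`. -/
theorem component_sum_bound :
    ∃ n₀ : ℕ, ∀ n : ℕ, n₀ ≤ n → ∀ r : ℕ, 2 ≤ r → ∀ c : Fin r → ℕ,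
      (∀ i, 0 < c i) → Monotone c → (∑ i, c i) = n →
      (∑ i, ((c i).choose 2 : ℝ)) +
          4 * Real.logb 2 n *
            (∑ i ∈ Finset.univ.filter (fun i : Fin r => (i : ℕ) < r - 1), (c i : ℝ)) ≤
        ((n - 1).choose 2 : ℝ) + 4 * Real.logb 2 n := by
  obtain ⟨n₀, hn₀⟩ := eventually_atTop.1 eventually_six_mul_logb_mul_le_choose_two
  refine ⟨n₀, fun n hn r hr c hpos hmono hsum => ?_⟩
  obtain ⟨m, rfl⟩ : ∃ m, r = m + 1 := ⟨r - 1, by omega⟩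
  have hfirst : (0 : Fin (m + 1)) ∈ univ.erase (Fin.last m) :=
    mem_erase.2 ⟨fun h => by simp [Fin.ext_iff] at h; omega, mem_univ _⟩
  subst hsum
  rw [Fin.filter_val_lt_pred_eq_erase_last]
  exact sum_choose_two_add_mul_sum_erase_le (mem_univ _) (fun i _ => hmono (Fin.le_last i))
    ((hpos 0).trans_le (single_le_sum (fun _ _ => Nat.zero_le _) hfirst))
    (div_nonneg (Real.log_natCast_nonneg _) (Real.log_nonneg one_le_two)) (hn₀ _ hn)
end
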